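/- Assume the compatibility condition Π_L Π_G = Π_G Π_L, that R is three times continuously differentiable, that R^aug(A) ≥ 0 for every A ∈ L, that ⟨(R^aug)''(A)Y, Y⟩ ≥ σ‖Y‖² for all A ∈ E and Y ∈ TE^⊥ for some σ ∈ ℝ, and that the third derivative of R^aug is uniformly bounded by M. Let γ > 0 and let A : [0,∞) → L be a differentiable curve satisfying A'(t) = −Π_L ∇R^aug(A(t)) − γ Π_{E⊥} A(t) for all t ≥ 0, and set Y(t) := Π_{E⊥} A(t) and α := (2/γ) R^aug(A(0)) + ‖Y(0)‖². Then for all t ≥ 0, (d/dt)(½‖Y(t)‖²) ≤ ((M/2)√α − σ − γ)‖Y(t)‖². -/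

import Mathlib

/-!
Write `Y = Π_{E⊥} A` and `X = A - Y`. Because `Π_L` and `Π_G` commute, `X` lies in
`E = H_G ∩ L` and the fixed subspace `H_G` is orthogonal to `TE^⊥`. The augmented risk is
`G`-invariant, so its gradient at the fixed point `X` is again fixed, hence orthogonal to `Y`;
a second-order Taylor expansion of the gradient around `X` then gives
`⟨∇R^aug(A), Y⟩ ≥ (σ - (M/2)‖Y‖)‖Y‖²`. Finally `(2/γ) R^aug(A) + ‖Y‖²` is a Lyapunov function
of the flow (its derivative is `-(2/γ)‖A'‖²`), and `R^aug ≥ 0` on `L` turns this into `‖Y‖² ≤ α`.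
-/

open MeasureTheory InnerProductSpace RealInnerProductSpace

noncomputable section

/-- The fixed-point subspace `H_G = {v : ρ(g) v = v for all g}` of an orthogonal
representation `ρ : G → O(V)`. -/
def fixedSubmodule {G V : Type*} [Group G] [NormedAddCommGroup V] [InnerProductSpace ℝ V]
    (ρ : G →* (V ≃ₗᵢ[ℝ] V)) : Submodule ℝ V where
  carrier := {v | ∀ g : G, ρ g v = v}
  add_mem' := by
    intro a b ha hb g
    simp [map_add, ha g, hb g]
  zero_mem' := by
    intro g
    simp
  smul_mem' := by
    intro c a ha g
    rw [_root_.map_smul, ha g]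

/-- The orthogonal projection onto a subspace `K`, as a map `V → V`. -/
def projSub {V : Type*} [NormedAddCommGroup V] [InnerProductSpace ℝ V] (K : Submodule ℝ V)
    [K.HasOrthogonalProjection] : V →L[ℝ] V :=
  K.subtypeL.comp (K.orthogonalProjectionOnto)

/-- The augmented risk `R^aug(A) = ∫_G R(ρ(g) A) dμ(g)`. -/
def augRisk {G V : Type*} [Group G] [MeasurableSpace G]
    [NormedAddCommGroup V] [InnerProductSpace ℝ V]
    (μ : Measure G) (ρ : G →* (V ≃ₗᵢ[ℝ] V)) (R : V → ℝ) : V → ℝ :=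
  fun A => ∫ g, R (ρ g A) ∂μ

/-- The Hessian of `f : V → ℝ` at `A`, regarded as a linear map `V → V`
(the derivative of the gradient field). -/
def hess {V : Type*} [NormedAddCommGroup V] [InnerProductSpace ℝ V] [CompleteSpace V]
    (f : V → ℝ) (A : V) : V →L[ℝ] V :=
  fderiv ℝ (gradient f) A

open Metric ContinuousLinearMap

section Projection

variable {V : Type*} [NormedAddCommGroup V] [InnerProductSpace ℝ V]

theorem projSub_eq_starProjection (K : Submodule ℝ V) [K.HasOrthogonalProjection] :
    projSub K = K.starProjection :=
  rfl

theorem starProjection_inf_orthogonal_eq_sub {E L : Submodule ℝ V} (hEL : E ≤ L)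
    [E.HasOrthogonalProjection] [(L ⊓ Eᗮ).HasOrthogonalProjection] {x : V} (hx : x ∈ L) :
    (L ⊓ Eᗮ).starProjection x = x - E.starProjection x := by
  refine Submodule.eq_starProjection_of_mem_of_inner_eq_zero
    ⟨sub_mem hx (hEL (E.starProjection_apply_mem x)), E.sub_starProjection_mem_orthogonal x⟩
    fun w hw => ?_
  rw [sub_sub_cancel]
  exact (Submodule.mem_orthogonal E w).1 hw.2 _ (E.starProjection_apply_mem x)

theorem inner_eq_zero_of_starProjection_comm {H L : Submodule ℝ V}
    [H.HasOrthogonalProjection] [L.HasOrthogonalProjection]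
    (hcomm : L.starProjection ∘L H.starProjection = H.starProjection ∘L L.starProjection)
    {h y : V} (hh : h ∈ H) (hy : y ∈ L ⊓ (H ⊓ L)ᗮ) : ⟪h, y⟫_ℝ = 0 := by
  have hLh : L.starProjection h ∈ H ⊓ L := by
    refine ⟨?_, L.starProjection_apply_mem h⟩
    have h_comm_h := congr($hcomm h)
    rw [comp_apply, comp_apply, Submodule.starProjection_eq_self_iff.2 hh] at h_comm_h
    exact h_comm_h ▸ H.starProjection_apply_mem _
  calc ⟪h, y⟫_ℝ = ⟪L.starProjection h, y⟫_ℝ := by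
        rw [L.inner_starProjection_left_eq_right, Submodule.starProjection_eq_self_iff.2 hy.1]
    _ = 0 := (Submodule.mem_orthogonal _ y).1 hy.2 _ hLh

theorem inner_neg_starProjection_sub_smul (L : Submodule ℝ V) [L.HasOrthogonalProjection]
    (g : V) {y : V} (hy : y ∈ L) (γ : ℝ) :
    ⟪-L.starProjection g - γ • y, y⟫_ℝ = -⟪g, y⟫_ℝ - γ * ‖y‖ ^ 2 := by
  rw [inner_sub_left, inner_neg_left, real_inner_smul_left, L.inner_starProjection_left_eq_right,
    Submodule.starProjection_eq_self_iff.2 hy, real_inner_self_eq_norm_sq]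

/-- With `v = -Π_L g - γ y` the left-hand side equals `-(2/γ)‖v‖²`. -/
theorem lyapunov_deriv_nonpos (L : Submodule ℝ V) [L.HasOrthogonalProjection]
    {γ : ℝ} (hγ : 0 < γ) (g : V) {y : V} (hy : y ∈ L) :
    2 / γ * ⟪g, -L.starProjection g - γ • y⟫_ℝ + 2 * ⟪-L.starProjection g - γ • y, y⟫_ℝ ≤ 0 := by
  set v := -L.starProjection g - γ • y with hv
  have hvL : v ∈ L := sub_mem (neg_mem (L.starProjection_apply_mem g)) (L.smul_mem γ hy)
  have hPg : L.starProjection g = -v - γ • y := by rw [hv]; abel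
  have hgv : ⟪g, v⟫_ℝ = -‖v‖ ^ 2 - γ * ⟪y, v⟫_ℝ := by
    calc ⟪g, v⟫_ℝ = ⟪L.starProjection g, v⟫_ℝ := by
          rw [L.inner_starProjection_left_eq_right, Submodule.starProjection_eq_self_iff.2 hvL]
      _ = -‖v‖ ^ 2 - γ * ⟪y, v⟫_ℝ := by
          rw [hPg, inner_sub_left, inner_neg_left, real_inner_smul_left,
            real_inner_self_eq_norm_sq]
  have hW : 2 / γ * (-‖v‖ ^ 2 - γ * ⟪y, v⟫_ℝ) + 2 * ⟪y, v⟫_ℝ = -(2 / γ * ‖v‖ ^ 2) := by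
    field_simp
    ring
  rw [hgv, real_inner_comm y v, hW, neg_nonpos]
  positivity

theorem hasDerivAt_norm_sq_starProjection (K : Submodule ℝ V) [K.HasOrthogonalProjection]
    {A : ℝ → V} {A' : V} {t : ℝ} (hA : HasDerivAt A A' t) :
    HasDerivAt (fun s => ‖K.starProjection (A s)‖ ^ 2)
      (2 * ⟪A', K.starProjection (A t)⟫_ℝ) t := by
  refine (K.starProjection.hasFDerivAt.comp_hasDerivAt t hA).norm_sq.congr_deriv ?_
  rw [← K.inner_starProjection_left_eq_right, Function.comp_apply,
    Submodule.starProjection_eq_self_iff.2 (K.starProjection_apply_mem _), real_inner_comm]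

end Projection

section Flow

variable {V : Type*} [NormedAddCommGroup V] [InnerProductSpace ℝ V] [CompleteSpace V]

theorem norm_sq_starProjection_le_of_flow {F : V → ℝ} (hF : Differentiable ℝ F)
    {L K : Submodule ℝ V} [L.HasOrthogonalProjection] [K.HasOrthogonalProjection] (hKL : K ≤ L)
    {γ : ℝ} (hγ : 0 < γ) {A : ℝ → V} (hpos : ∀ t, 0 ≤ t → 0 ≤ F (A t))
    (hode : ∀ t, 0 ≤ t → HasDerivAt A
      (-L.starProjection (gradient F (A t)) - γ • K.starProjection (A t)) t)
    {t : ℝ} (ht : 0 ≤ t) :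
    ‖K.starProjection (A t)‖ ^ 2 ≤ 2 / γ * F (A 0) + ‖K.starProjection (A 0)‖ ^ 2 := by
  set v := fun s => -L.starProjection (gradient F (A s)) - γ • K.starProjection (A s)
  set W := fun s => 2 / γ * F (A s) + ‖K.starProjection (A s)‖ ^ 2
  have hW : ∀ s, 0 ≤ s → HasDerivAt W
      (2 / γ * ⟪gradient F (A s), v s⟫_ℝ + 2 * ⟪v s, K.starProjection (A s)⟫_ℝ) s := fun s hs =>
    (((hF (A s)).hasGradientAt.hasFDerivAt.comp_hasDerivAt s (hode s hs)).const_mul _).add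
      (hasDerivAt_norm_sq_starProjection K (hode s hs))
  have hanti : AntitoneOn W (Set.Ici 0) := by
    refine antitoneOn_of_hasDerivWithinAt_nonpos (convex_Ici 0)
      (f' := fun s => 2 / γ * ⟪gradient F (A s), v s⟫_ℝ + 2 * ⟪v s, K.starProjection (A s)⟫_ℝ)
      (fun s hs => (hW s hs).continuousAt.continuousWithinAt) (fun s hs => ?_) (fun s _ => ?_)
    · rw [interior_Ici] at hs
      exact (hW s (le_of_lt hs)).hasDerivWithinAt
    · exact lyapunov_deriv_nonpos L hγ _ (hKL (K.starProjection_apply_mem _))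
  have hWt := hanti Set.self_mem_Ici ht ht
  have hFt : 0 ≤ 2 / γ * F (A t) := mul_nonneg (by positivity) (hpos t ht)
  simp only [W] at hWt
  linarith

end Flow

theorem norm_add_sub_sub_le_of_lipschitz_fderiv {E F : Type*} [NormedAddCommGroup E]
    [NormedSpace ℝ E] [NormedAddCommGroup F] [NormedSpace ℝ F] {f : E → F} {f' : E → E →L[ℝ] F}
    (hf : ∀ x, HasFDerivAt f (f' x) x) {M : ℝ} {x : E} (hf' : ∀ z, ‖f' z - f' x‖ ≤ M * ‖z - x‖)
    (y : E) : ‖f (x + y) - f x - f' x y‖ ≤ M / 2 * ‖y‖ ^ 2 := by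
  set φ : ℝ → F := fun s => f (x + s • y) - f x - s • f' x y
  have hφ : ∀ s : ℝ, HasDerivAt φ (f' (x + s • y) y - f' x y) s := by
    intro s
    have hline : HasDerivAt (fun s : ℝ => x + s • y) y s := by
      simpa using ((hasDerivAt_id s).smul_const y).const_add x
    have hlin : HasDerivAt (fun s : ℝ => s • f' x y) (f' x y) s := by
      simpa using (hasDerivAt_id s).smul_const (f' x y)
    exact (((hf _).comp_hasDerivAt s hline).sub_const (f x)).sub hlin
  have hB : ∀ s : ℝ, HasDerivAt (fun s => M / 2 * ‖y‖ ^ 2 * s ^ 2) (M * ‖y‖ ^ 2 * s) s := by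
    intro s
    refine ((hasDerivAt_pow 2 s).const_mul (M / 2 * ‖y‖ ^ 2)).congr_deriv ?_
    push_cast
    ring
  have hφ' : ∀ s ∈ Set.Ico (0 : ℝ) 1, ‖f' (x + s • y) y - f' x y‖ ≤ M * ‖y‖ ^ 2 * s := by
    intro s hs
    calc ‖f' (x + s • y) y - f' x y‖ = ‖(f' (x + s • y) - f' x) y‖ := by rw [sub_apply]
      _ ≤ ‖f' (x + s • y) - f' x‖ * ‖y‖ := le_opNorm _ y
      _ ≤ M * ‖x + s • y - x‖ * ‖y‖ := by gcongr; exact hf' _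
      _ = M * ‖y‖ ^ 2 * s := by
          rw [add_sub_cancel_left, norm_smul, Real.norm_of_nonneg hs.1]
          ring
  have h := image_norm_le_of_norm_deriv_right_le_deriv_boundary
    (fun s _ => (hφ s).continuousAt.continuousWithinAt) (fun s _ => (hφ s).hasDerivWithinAt)
    (by simp [φ]) hB hφ' (Set.right_mem_Icc.2 zero_le_one)
  simpa [φ] using h

section Hessian

variable {V : Type*} [NormedAddCommGroup V] [InnerProductSpace ℝ V] [CompleteSpace V]

theorem hasFDerivAt_gradient {F : V → ℝ} {x : V} {D : V →L[ℝ] V →L[ℝ] ℝ}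
    (h : HasFDerivAt (fderiv ℝ F) D x) :
    HasFDerivAt (gradient F) ((toDual ℝ V).symm.toLinearIsometry.toContinuousLinearMap ∘L D) x :=
  (toDual ℝ V).symm.toLinearIsometry.toContinuousLinearMap.hasFDerivAt.comp x h

theorem hasFDerivAt_gradient_hess {F : V → ℝ} (hF : ContDiff ℝ 2 F) (x : V) :
    HasFDerivAt (gradient F) (hess F x) x :=
  (hasFDerivAt_gradient (((hF.fderiv_right (by norm_num)).differentiable one_ne_zero)
    x).hasFDerivAt).differentiableAt.hasFDerivAt

theorem norm_hess_sub_le {F : V → ℝ} (hF : ContDiff ℝ 3 F) {M : ℝ}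
    (hM : ∀ x, ‖iteratedFDeriv ℝ 3 F x‖ ≤ M) (a b : V) :
    ‖hess F b - hess F a‖ ≤ M * ‖b - a‖ := by
  have hD1 : ContDiff ℝ 2 (fderiv ℝ F) := hF.fderiv_right (by norm_num)
  have hD2 : ContDiff ℝ 1 (fderiv ℝ (fderiv ℝ F)) := hD1.fderiv_right (by norm_num)
  have hhess : ∀ x, hess F x =
      (toDual ℝ V).symm.toLinearIsometry.toContinuousLinearMap ∘L fderiv ℝ (fderiv ℝ F) x :=
    fun x => (hasFDerivAt_gradient ((hD1.differentiable two_ne_zero x).hasFDerivAt)).fderiv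
  rw [hhess, hhess, ← comp_sub, LinearIsometry.norm_toContinuousLinearMap_comp]
  refine Convex.norm_image_sub_le_of_norm_fderiv_le (fun x _ => hD2.differentiable one_ne_zero x)
    (fun x _ => ?_) convex_univ trivial trivial
  rw [← norm_iteratedFDeriv_one, norm_iteratedFDeriv_fderiv, norm_iteratedFDeriv_fderiv]
  exact hM x

theorem inner_gradient_add_ge {F : V → ℝ} (hF : ContDiff ℝ 3 F) {M : ℝ}
    (hM : ∀ x, ‖iteratedFDeriv ℝ 3 F x‖ ≤ M) {σ : ℝ} {X y : V}
    (hX : ⟪gradient F X, y⟫_ℝ = 0) (hσ : σ * ‖y‖ ^ 2 ≤ ⟪hess F X y, y⟫_ℝ) :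
    (σ - M / 2 * ‖y‖) * ‖y‖ ^ 2 ≤ ⟪gradient F (X + y), y⟫_ℝ := by
  set r := gradient F (X + y) - gradient F X - hess F X y
  have hr : ‖r‖ ≤ M / 2 * ‖y‖ ^ 2 :=
    norm_add_sub_sub_le_of_lipschitz_fderiv (hasFDerivAt_gradient_hess (hF.of_le (by norm_num)))
      (fun z => norm_hess_sub_le hF hM X z) y
  have hsplit : ⟪gradient F (X + y), y⟫_ℝ = ⟪hess F X y, y⟫_ℝ + ⟪r, y⟫_ℝ := by
    simp only [r, inner_sub_left, hX]
    ring
  have hry : -(‖r‖ * ‖y‖) ≤ ⟪r, y⟫_ℝ := (abs_le.1 (abs_real_inner_le_norm r y)).1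
  nlinarith [mul_le_mul_of_nonneg_right hr (norm_nonneg y)]

end Hessian

universe u

section Sandwich

variable {V W W' : Type*} [NormedAddCommGroup V] [NormedSpace ℝ V] [NormedAddCommGroup W]
  [NormedSpace ℝ W] [NormedAddCommGroup W'] [NormedSpace ℝ W']

/-- The map `m ↦ A ∘ m ∘ T`. -/
def sandwichCLM (A : W →L[ℝ] W') (T : V →L[ℝ] V) : (V →L[ℝ] W) →L[ℝ] (V →L[ℝ] W') :=
  (compL ℝ V W W' A) ∘L (compL ℝ V V W).flip T

theorem continuous_sandwichCLM {G : Type*} [TopologicalSpace G] {A : G → W →L[ℝ] W'}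
    (hA : Continuous A) {T : G → V →L[ℝ] V} (hT : Continuous T) :
    Continuous fun g => sandwichCLM (A g) (T g) :=
  ((compL ℝ V W W').continuous.comp hA).clm_comp ((compL ℝ V V W).flip.continuous.comp hT)

end Sandwich

section ParametricIntegral

variable {G : Type*} [TopologicalSpace G] [CompactSpace G] [MeasurableSpace G]
  [OpensMeasurableSpace G] (μ : Measure G) [IsFiniteMeasure μ]

theorem hasFDerivAt_integral_of_continuous_uncurry {V W : Type*} [NormedAddCommGroup V]
    [NormedSpace ℝ V] [FiniteDimensional ℝ V] [NormedAddCommGroup W] [NormedSpace ℝ W]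
    [FiniteDimensional ℝ W] {f : V → G → W} {f' : V → G → V →L[ℝ] W}
    (hf : Continuous f.uncurry) (hf' : Continuous f'.uncurry)
    (hff' : ∀ x g, HasFDerivAt (f · g) (f' x g) x) (x₀ : V) :
    HasFDerivAt (fun x => ∫ g, f x g ∂μ) (∫ g, f' x₀ g ∂μ) x₀ := by
  obtain ⟨C, hC⟩ := ((isCompact_closedBall x₀ 1).prod isCompact_univ).exists_bound_of_continuousOn
    hf'.continuousOn
  refine hasFDerivAt_integral_of_dominated_of_fderiv_le (bound := fun _ => C)
    (ball_mem_nhds x₀ one_pos) (Filter.Eventually.of_forall fun x => ?_) ?_ ?_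
    (Filter.Eventually.of_forall fun g x hx => hC (x, g) ⟨ball_subset_closedBall hx, trivial⟩)
    (integrable_const C) (Filter.Eventually.of_forall fun g x _ => hff' x g)
  · exact (hf.comp (Continuous.prodMk_right x)).aestronglyMeasurable
  · exact (hf.comp (Continuous.prodMk_right x₀)).integrable_of_hasCompactSupport
      (HasCompactSupport.of_compactSpace _)
  · exact (hf'.comp (Continuous.prodMk_right x₀)).aestronglyMeasurable

variable {V : Type u} [NormedAddCommGroup V] [NormedSpace ℝ V] [FiniteDimensional ℝ V]
  {T : G → V →L[ℝ] V}

theorem hasFDerivAt_integral_comp (hT : Continuous T) {W W' : Type*} [NormedAddCommGroup W]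
    [NormedSpace ℝ W] [FiniteDimensional ℝ W] [NormedAddCommGroup W'] [NormedSpace ℝ W']
    [FiniteDimensional ℝ W'] {u : V → W} (hu : ContDiff ℝ 1 u) {A : G → W →L[ℝ] W'}
    (hA : Continuous A) (x₀ : V) :
    HasFDerivAt (fun x => ∫ g, A g (u (T g x)) ∂μ)
      (∫ g, sandwichCLM (A g) (T g) (fderiv ℝ u (T g x₀)) ∂μ) x₀ := by
  have hTx : Continuous fun p : V × G => T p.2 p.1 :=
    (hT.comp continuous_snd).clm_apply continuous_fst
  refine hasFDerivAt_integral_of_continuous_uncurry μ (f := fun x g => A g (u (T g x)))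
    (f' := fun x g => sandwichCLM (A g) (T g) (fderiv ℝ u (T g x)))
    ((hA.comp continuous_snd).clm_apply (hu.continuous.comp hTx))
    (((continuous_sandwichCLM hA hT).comp continuous_snd).clm_apply
      ((hu.continuous_fderiv one_ne_zero).comp hTx)) (fun x g => ?_) x₀
  exact (A g).hasFDerivAt.comp x
    (((hu.differentiable one_ne_zero _).hasFDerivAt).comp x (T g).hasFDerivAt)

theorem contDiff_integral_comp (hT : Continuous T) (n : ℕ) {W W' : Type u}
    [NormedAddCommGroup W] [NormedSpace ℝ W] [FiniteDimensional ℝ W] [NormedAddCommGroup W']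
    [NormedSpace ℝ W'] [FiniteDimensional ℝ W'] {u : V → W} (hu : ContDiff ℝ n u)
    {A : G → W →L[ℝ] W'} (hA : Continuous A) :
    ContDiff ℝ n (fun x => ∫ g, A g (u (T g x)) ∂μ) := by
  induction n generalizing W W' with
  | zero =>
    refine contDiff_zero.2 ?_
    have hTx : Continuous fun p : V × G => T p.2 p.1 :=
      (hT.comp continuous_snd).clm_apply continuous_fst
    simpa using continuous_parametric_integral_of_continuous (μ := μ)
      ((hA.comp continuous_snd).clm_apply ((contDiff_zero.1 hu).comp hTx)) isCompact_univ
  | succ n ih =>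
    have hderiv := hasFDerivAt_integral_comp μ hT (hu.of_le (by norm_cast; omega)) hA
    push_cast at hu ⊢
    refine contDiff_succ_iff_fderiv.2 ⟨fun x => (hderiv x).differentiableAt, by simp, ?_⟩
    rw [funext fun x => (hderiv x).fderiv]
    exact ih (hu.fderiv_right le_rfl) (continuous_sandwichCLM hA hT)

end ParametricIntegral

theorem gradient_apply_of_comp_eq {V : Type*} [NormedAddCommGroup V] [InnerProductSpace ℝ V]
    [CompleteSpace V] {F : V → ℝ} (T : V ≃ₗᵢ[ℝ] V) (hF : ∀ x, F (T x) = F x) (x : V) :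
    gradient F (T x) = T (gradient F x) := by
  have hD := ContinuousLinearEquiv.comp_right_fderiv (f := F) (x := x) T.toContinuousLinearEquiv
  rw [show F ∘ T.toContinuousLinearEquiv = F from funext hF] at hD
  refine ext_inner_right ℝ fun w => ?_
  obtain ⟨u, rfl⟩ := T.surjective w
  rw [T.inner_map_map, inner_gradient_left, inner_gradient_left, hD]
  rfl

section AugmentedRisk

variable {G V : Type*} [Group G] [TopologicalSpace G] [IsTopologicalGroup G] [CompactSpace G]
  [MeasurableSpace G] [BorelSpace G] [NormedAddCommGroup V] [InnerProductSpace ℝ V]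
  (μ : Measure G) [μ.IsHaarMeasure] [IsProbabilityMeasure μ] (ρ : G →* (V ≃ₗᵢ[ℝ] V))

/-- Compact groups are unimodular: the right translate of `μ` is again a Haar probability
measure, hence equal to `μ`. -/
theorem isMulRightInvariant_of_isProbabilityMeasure : μ.IsMulRightInvariant := by
  refine ⟨fun h => ?_⟩
  have : IsProbabilityMeasure (μ.map (· * h)) :=
    Measure.isProbabilityMeasure_map (measurable_mul_const h).aemeasurable
  exact Measure.isHaarMeasure_eq_of_isProbabilityMeasure (μ.map (· * h)) μ

theorem augRisk_apply_rep (R : V → ℝ) (h : G) (x : V) :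
    augRisk μ ρ R (ρ h x) = augRisk μ ρ R x := by
  have := isMulRightInvariant_of_isProbabilityMeasure μ
  calc ∫ g, R (ρ g (ρ h x)) ∂μ = ∫ g, R (ρ (g * h) x) ∂μ := by
        simp only [map_mul, LinearIsometryEquiv.coe_mul, Function.comp_apply]
    _ = ∫ g, R (ρ g x) ∂μ := integral_mul_right_eq_self (fun g => R (ρ g x)) h

theorem gradient_augRisk_mem_fixedSubmodule [CompleteSpace V] (R : V → ℝ) {x : V}
    (hx : x ∈ fixedSubmodule ρ) : gradient (augRisk μ ρ R) x ∈ fixedSubmodule ρ := fun h => by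
  have := gradient_apply_of_comp_eq (ρ h) (augRisk_apply_rep μ ρ R h) x
  rw [hx h] at this
  exact this.symm

end AugmentedRisk

theorem contDiff_augRisk {G V : Type*} [Group G] [TopologicalSpace G] [CompactSpace G]
    [MeasurableSpace G] [OpensMeasurableSpace G] (μ : Measure G) [IsFiniteMeasure μ]
    [NormedAddCommGroup V] [InnerProductSpace ℝ V] [FiniteDimensional ℝ V]
    {ρ : G →* (V ≃ₗᵢ[ℝ] V)} (hρ : Continuous fun p : G × V => ρ p.1 p.2) {R : V → ℝ} (n : ℕ)
    (hR : ContDiff ℝ (n + 1) R) : ContDiff ℝ (n + 1) (augRisk μ ρ R) := by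
  have hT : Continuous fun g => ((ρ g).toContinuousLinearEquiv : V →L[ℝ] V) :=
    continuous_clm_apply.2 fun v => hρ.comp (continuous_id.prodMk continuous_const)
  have hderiv := hasFDerivAt_integral_comp μ hT (hR.of_le (by simp))
    (A := fun _ => ContinuousLinearMap.id ℝ ℝ) continuous_const
  refine contDiff_succ_iff_fderiv.2 ⟨fun x => (hderiv x).differentiableAt, by simp, ?_⟩
  rw [show fderiv ℝ (augRisk μ ρ R) = _ from funext fun x => (hderiv x).fderiv]
  exact contDiff_integral_comp μ hT n (hR.fderiv_right le_rfl)
    (continuous_sandwichCLM continuous_const hT)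

/-- Along the regularized augmented gradient flow, with
`Y(t) = Π_{Eᗮ} A(t)` and `α = (2/γ) R^aug(A(0)) + ‖Y(0)‖²`, one has
`(d/dt)(½‖Y(t)‖²) ≤ ((M/2)√α - σ - γ)‖Y(t)‖²` for all `t ≥ 0`. -/
theorem gronwall_condition
    {G V : Type*} [Group G] [TopologicalSpace G] [IsTopologicalGroup G] [CompactSpace G]
    [MeasurableSpace G] [BorelSpace G]
    [NormedAddCommGroup V] [InnerProductSpace ℝ V] [FiniteDimensional ℝ V]
    (μ : Measure G) [μ.IsHaarMeasure] [IsProbabilityMeasure μ]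
    (ρ : G →* (V ≃ₗᵢ[ℝ] V)) (hρ : Continuous fun p : G × V => ρ p.1 p.2)
    (L : Submodule ℝ V)
    (hcompat : (projSub L).comp (projSub (fixedSubmodule ρ)) =
      (projSub (fixedSubmodule ρ)).comp (projSub L))
    (R : V → ℝ) (hR : ContDiff ℝ 3 R)
    (hpos : ∀ A ∈ L, 0 ≤ augRisk μ ρ R A)
    (σ : ℝ)
    (hσ : ∀ A ∈ fixedSubmodule ρ ⊓ L, ∀ Y ∈ L ⊓ (fixedSubmodule ρ ⊓ L)ᗮ,
      σ * ‖Y‖ ^ 2 ≤ ⟪(hess (augRisk μ ρ R) A) Y, Y⟫_ℝ)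
    (M : ℝ) (hM : ∀ A : V, ‖iteratedFDeriv ℝ 3 (augRisk μ ρ R) A‖ ≤ M)
    (γ : ℝ) (hγ : 0 < γ)
    (A : ℝ → V)
    (hmem : ∀ t : ℝ, 0 ≤ t → A t ∈ L)
    (hode : ∀ t : ℝ, 0 ≤ t → HasDerivAt A
      (-(projSub L (gradient (augRisk μ ρ R) (A t)))
        - γ • projSub (L ⊓ (fixedSubmodule ρ ⊓ L)ᗮ) (A t)) t) :
    ∀ t : ℝ, 0 ≤ t →
      deriv (fun s => (1 / 2) * ‖projSub (L ⊓ (fixedSubmodule ρ ⊓ L)ᗮ) (A s)‖ ^ 2) t ≤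
        ((M / 2) * Real.sqrt ((2 / γ) * augRisk μ ρ R (A 0)
              + ‖projSub (L ⊓ (fixedSubmodule ρ ⊓ L)ᗮ) (A 0)‖ ^ 2)
            - σ - γ) * ‖projSub (L ⊓ (fixedSubmodule ρ ⊓ L)ᗮ) (A t)‖ ^ 2 := by
  simp only [projSub_eq_starProjection] at hcompat hode ⊢
  intro t ht
  set F := augRisk μ ρ R
  set E := fixedSubmodule ρ ⊓ L
  set K := L ⊓ Eᗮ
  set y := K.starProjection (A t)
  have hF : ContDiff ℝ 3 F := contDiff_augRisk μ hρ 2 hR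
  have hyK : y ∈ K := K.starProjection_apply_mem _
  have hXE : A t - y ∈ E := by
    rw [show y = A t - E.starProjection (A t) from
      starProjection_inf_orthogonal_eq_sub inf_le_right (hmem t ht), sub_sub_cancel]
    exact E.starProjection_apply_mem _
  have hperp : ⟪gradient F (A t - y), y⟫_ℝ = 0 := inner_eq_zero_of_starProjection_comm hcompat
    (gradient_augRisk_mem_fixedSubmodule μ ρ R hXE.1) hyK
  have hlocal := inner_gradient_add_ge hF hM hperp (hσ _ hXE y hyK)
  rw [sub_add_cancel] at hlocal
  have hy_le : ‖y‖ ≤ √((2 / γ) * F (A 0) + ‖K.starProjection (A 0)‖ ^ 2) :=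
    Real.le_sqrt_of_sq_le (norm_sq_starProjection_le_of_flow (hF.differentiable (by norm_num))
      inf_le_left hγ (fun s hs => hpos _ (hmem s hs)) hode ht)
  have hM0 : 0 ≤ M := (norm_nonneg _).trans (hM 0)
  rw [((hasDerivAt_norm_sq_starProjection K (hode t ht)).const_mul (1 / 2)).deriv,
    inner_neg_starProjection_sub_smul L _ hyK.1]
  nlinarith [mul_nonneg (mul_nonneg hM0 (sub_nonneg.2 hy_le)) (sq_nonneg ‖y‖)]
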